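/- arXiv:1510.05199 — 2 statements merged into one kernel-verified Lean document; each statement's English description precedes it below -/
import Mathlib

section
/- Let (Ω, A) be a compatible pair with associated norm function ρ. Then ρ is continuous on ℝ², and {ξ : ρ(ξ) < 1} = Ω, {ξ : ρ(ξ) = 1} = ∂Ω. -/
/-!
For `ξ ≠ 0` the orbit `t ↦ t^A ξ` is continuous on `(0, ∞)`, tends to `0` as `t → 0⁺` and to
infinity as `t → ∞`. Both limits come from `exp (-u A) → 0` as `u → ∞`: the eigenvalue condition
makes `τ = tr A` and `δ = det A` positive, and then `δ |x|² + |A x|²` is a Lyapunov function for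
`x' = -A x`. Since the orbit meets `∂Ω` only at `t = ρ(ξ)⁻¹`, connectedness puts it inside `Ω`
before that time and outside `closure Ω` after it. Hence `{ρ < b}` and `{ρ ≤ b}` are the preimages
of `Ω` and `closure Ω` under the linear map `b^{-A}`, so they are open and closed respectively,
which makes `ρ` continuous; `b = 1` gives the two level sets.
-/

open Matrix

/-- The nonisotropic dilation `t^A = exp((log t) A)`. -/
noncomputable def dil (A : Matrix (Fin 2) (Fin 2) ℝ) (t : ℝ) : Matrix (Fin 2) (Fin 2) ℝ :=
  NormedSpace.exp (Real.log t • A)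

open Filter Set Topology

section Derivatives

variable {n : Type*} [Fintype n] {x y : ℝ → n → ℝ} {x' y' : n → ℝ} {u : ℝ}

theorem HasDerivAt.dotProduct (hx : HasDerivAt x x' u) (hy : HasDerivAt y y' u) :
    HasDerivAt (fun u => x u ⬝ᵥ y u) (x u ⬝ᵥ y' + x' ⬝ᵥ y u) u :=
  (dotProductBilin ℝ ℝ : (n → ℝ) →ₗ[ℝ] (n → ℝ) →ₗ[ℝ] ℝ).toContinuousBilinearMap
    |>.hasDerivAt_of_bilinear (fun _ => hx) (fun _ => hy)

theorem HasDerivAt.const_mulVec {m : Type*} [Fintype m] (A : Matrix m n ℝ)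
    (hx : HasDerivAt x x' u) : HasDerivAt (fun u => A *ᵥ x u) (A *ᵥ x') u :=
  A.mulVecLin.toContinuousLinearMap.hasFDerivAt.comp_hasDerivAt u hx

end Derivatives

theorem tendsto_atTop_zero_of_hasDerivAt_le_neg_mul {V V' : ℝ → ℝ} {k : ℝ} (hk : 0 < k)
    (hV0 : ∀ u, 0 ≤ V u) (hV : ∀ u, HasDerivAt V (V' u) u) (hV' : ∀ u, V' u ≤ -k * V u) :
    Tendsto V atTop (𝓝 0) := by
  have bound (u : ℝ) (hu : 0 ≤ u) : V u ≤ V 0 * Real.exp (-k * u) := by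
    have := le_gronwallBound_of_liminf_deriv_right_le (f := V) (δ := V 0) (K := -k) (ε := 0)
      (fun x _ => (hV x).continuousAt.continuousWithinAt)
      (fun x _ r hr => (hV x).hasDerivWithinAt.liminf_right_slope_le hr) le_rfl
      (fun x _ => by simpa using hV' x) u ⟨hu, le_rfl⟩
    simpa [gronwallBound_ε0] using this
  have hexp : Tendsto (fun u => V 0 * Real.exp (-k * u)) atTop (𝓝 0) := by
    simpa using (Real.tendsto_exp_atBot.comp
      (tendsto_id.const_mul_atTop_of_neg (neg_neg_of_pos hk))).const_mul (V 0)
  exact squeeze_zero' (.of_forall hV0) ((eventually_ge_atTop 0).mono bound) hexp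

theorem tendsto_zero_of_tendsto_dotProduct_self {α n : Type*} [Fintype n] {l : Filter α}
    {x : α → n → ℝ} (hx : Tendsto (fun a => x a ⬝ᵥ x a) l (𝓝 0)) : Tendsto x l (𝓝 0) := by
  refine tendsto_pi_nhds.2 fun i => squeeze_zero_norm (fun a => ?_)
    ((Real.continuous_sqrt.tendsto 0).comp hx |>.trans (by simp))
  exact Real.abs_le_sqrt (Finset.single_le_sum (f := fun j => x a j * x a j)
    (fun j _ => mul_self_nonneg _) (Finset.mem_univ i) |>.trans_eq' (sq _).symm)

namespace Matrix

section LinftyNorm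

attribute [local instance] Matrix.linftyOpNormedRing Matrix.linftyOpNormedAlgebra

theorem hasDerivAt_exp_smul_mulVec {n : Type*} [Fintype n] [DecidableEq n] (B : Matrix n n ℝ)
    (ξ : n → ℝ) (u : ℝ) :
    HasDerivAt (fun u : ℝ => NormedSpace.exp (u • B) *ᵥ ξ)
      (B *ᵥ (NormedSpace.exp (u • B) *ᵥ ξ)) u := by
  have := ((mulVecBilin ℝ ℝ).flip ξ).toContinuousLinearMap.hasFDerivAt.comp_hasDerivAt u
    (hasDerivAt_exp_smul_const' B u)
  exact this.congr_deriv (mulVec_mulVec _ _ _).symm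

end LinftyNorm

theorem mulVec_mulVec_self_fin_two {R : Type*} [CommRing R] (A : Matrix (Fin 2) (Fin 2) R)
    (x : Fin 2 → R) : A *ᵥ (A *ᵥ x) = A.trace • (A *ᵥ x) - A.det • x := by
  refine funext (Fin.forall_fin_two.2 ⟨?_, ?_⟩) <;>
    simp only [mulVec, dotProduct, Fin.sum_univ_two, trace_fin_two, det_fin_two, Pi.sub_apply,
      Pi.smul_apply, smul_eq_mul] <;> ring

-- `adjugate A *ᵥ (A *ᵥ x) = det A • x`, and Cauchy–Schwarz bounds the left side.
theorem det_sq_mul_dotProduct_self_le (A : Matrix (Fin 2) (Fin 2) ℝ) (x : Fin 2 → ℝ) :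
    A.det ^ 2 * (x ⬝ᵥ x) ≤ (∑ i, ∑ j, A i j ^ 2) * (A *ᵥ x ⬝ᵥ A *ᵥ x) := by
  simp only [mulVec, dotProduct, Fin.sum_univ_two, det_fin_two]
  nlinarith [sq_nonneg ((A 0 1 * A 0 0 + A 1 1 * A 1 0) * x 0 + (A 0 1 ^ 2 + A 1 1 ^ 2) * x 1),
    sq_nonneg ((A 0 0 ^ 2 + A 1 0 ^ 2) * x 0 + (A 0 0 * A 0 1 + A 1 0 * A 1 1) * x 1),
    sq_nonneg (A 0 0 * x 0 + A 0 1 * x 1), sq_nonneg (A 1 0 * x 0 + A 1 1 * x 1)]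

theorem trace_pos_and_det_pos_of_re_pos {A : Matrix (Fin 2) (Fin 2) ℝ}
    (hA : ∀ μ ∈ spectrum ℂ (A.map (algebraMap ℝ ℂ)), 0 < μ.re) :
    0 < A.trace ∧ 0 < A.det := by
  -- The eigenvalues are the roots `(τ ± s) / 2` of `X² - τ X + δ`, where `s² = τ² - 4δ`.
  obtain ⟨s, hs⟩ := IsAlgClosed.exists_pow_nat_eq ((A.trace : ℂ) ^ 2 - 4 * A.det) two_pos
  have root_mem (r : ℂ) (hr : r ^ 2 - A.trace * r + A.det = 0) :
      r ∈ spectrum ℂ (A.map (algebraMap ℝ ℂ)) := by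
    rw [spectrum.mem_iff, isUnit_iff_isUnit_det, isUnit_iff_ne_zero, not_not, det_fin_two]
    simp only [trace_fin_two, det_fin_two, Complex.ofReal_add, Complex.ofReal_sub,
      Complex.ofReal_mul] at hr
    simp only [sub_apply, algebraMap_matrix_apply, map_apply, Complex.coe_algebraMap,
      Algebra.algebraMap_self, RingHom.id_apply, if_true, if_false, zero_ne_one, one_ne_zero]
    linear_combination hr
  have h₁ := hA _ (root_mem ((A.trace + s) / 2) (by linear_combination hs / 4))
  have h₂ := hA _ (root_mem ((A.trace - s) / 2) (by linear_combination hs / 4))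
  have hre := congrArg Complex.re hs
  simp only [Complex.div_ofNat_re, Complex.add_re, Complex.sub_re, Complex.ofReal_re, pow_two,
    Complex.mul_re, Complex.ofReal_im, Complex.re_ofNat, Complex.im_ofNat] at h₁ h₂ hre
  constructor <;> nlinarith [sq_nonneg s.im]

theorem tendsto_exp_smul_neg_mulVec_atTop {A : Matrix (Fin 2) (Fin 2) ℝ} (hτ : 0 < A.trace)
    (hδ : 0 < A.det) (ξ : Fin 2 → ℝ) :
    Tendsto (fun u : ℝ => NormedSpace.exp (u • -A) *ᵥ ξ) atTop (𝓝 0) := by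
  set x := fun u : ℝ => NormedSpace.exp (u • -A) *ᵥ ξ
  have hx (u : ℝ) : HasDerivAt x (-(A *ᵥ x u)) u :=
    (hasDerivAt_exp_smul_mulVec (-A) ξ u).congr_deriv (neg_mulVec _ _)
  have hAx (u : ℝ) : HasDerivAt (fun u => A *ᵥ x u) (-(A *ᵥ (A *ᵥ x u))) u :=
    ((hx u).const_mulVec A).congr_deriv (mulVec_neg _ _)
  -- By Cayley–Hamilton, `δ |x|² + |A x|²` decreases at rate `2τ |A x|²`.
  set V := fun u => A.det * (x u ⬝ᵥ x u) + (A *ᵥ x u ⬝ᵥ A *ᵥ x u)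
  have hV (u : ℝ) : HasDerivAt V (-(2 * A.trace) * (A *ᵥ x u ⬝ᵥ A *ᵥ x u)) u := by
    refine (((hx u).dotProduct (hx u)).const_mul A.det).add
      ((hAx u).dotProduct (hAx u)) |>.congr_deriv ?_
    rw [mulVec_mulVec_self_fin_two]
    simp only [dotProduct_neg, neg_dotProduct, dotProduct_sub, sub_dotProduct, dotProduct_smul,
      smul_dotProduct, smul_eq_mul, dotProduct_comm (x u)]
    ring
  have hsq (v : Fin 2 → ℝ) : 0 ≤ v ⬝ᵥ v := Fintype.sum_nonneg fun i => mul_self_nonneg (v i)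
  have hV_tendsto : Tendsto V atTop (𝓝 0) := by
    refine tendsto_atTop_zero_of_hasDerivAt_le_neg_mul
      (k := 2 * A.trace * A.det / (∑ i, ∑ j, A i j ^ 2 + A.det)) (by positivity)
      (fun u => add_nonneg (mul_nonneg hδ.le (hsq _)) (hsq _)) hV fun u => ?_
    have := det_sq_mul_dotProduct_self_le A (x u)
    rw [neg_mul, neg_mul, neg_le_neg_iff, div_mul_eq_mul_div, div_le_iff₀ (by positivity)]
    nlinarith [hsq (A *ᵥ x u)]
  refine tendsto_zero_of_tendsto_dotProduct_self (squeeze_zero (fun u => hsq (x u))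
    (fun u => ?_) (by simpa using hV_tendsto.div_const A.det))
  rw [le_div_iff₀ hδ]
  nlinarith [hsq (A *ᵥ x u)]

theorem tendsto_exp_smul_neg_atTop {A : Matrix (Fin 2) (Fin 2) ℝ}
    (hA : ∀ μ ∈ spectrum ℂ (A.map (algebraMap ℝ ℂ)), 0 < μ.re) :
    Tendsto (fun u : ℝ => NormedSpace.exp (u • -A)) atTop (𝓝 0) := by
  obtain ⟨hτ, hδ⟩ := trace_pos_and_det_pos_of_re_pos hA
  refine tendsto_pi_nhds.2 fun i => tendsto_pi_nhds.2 fun j => ?_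
  simpa [mulVec_single_one] using
    tendsto_pi_nhds.1 (tendsto_exp_smul_neg_mulVec_atTop hτ hδ (Pi.single j 1)) i

end Matrix

section Dilation

variable {A : Matrix (Fin 2) (Fin 2) ℝ}

theorem dil_one : dil A 1 = 1 := by
  simp [dil]

theorem dil_mul {s t : ℝ} (hs : 0 < s) (ht : 0 < t) : dil A (s * t) = dil A s * dil A t := by
  rw [dil, dil, dil, Real.log_mul hs.ne' ht.ne', add_smul]
  exact Matrix.exp_add_of_commute _ _ (((Commute.refl A).smul_left _).smul_right _)

theorem dil_inv_mulVec_dil_mulVec {t : ℝ} (ht : 0 < t) (ξ : Fin 2 → ℝ) :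
    dil A t⁻¹ *ᵥ (dil A t *ᵥ ξ) = ξ := by
  rw [mulVec_mulVec, ← dil_mul (inv_pos.2 ht) ht, inv_mul_cancel₀ ht.ne', dil_one, one_mulVec]

theorem tendsto_dil_nhdsGT_zero (hA : ∀ μ ∈ spectrum ℂ (A.map (algebraMap ℝ ℂ)), 0 < μ.re) :
    Tendsto (dil A) (𝓝[>] 0) (𝓝 0) := by
  have : dil A = fun t => NormedSpace.exp ((-Real.log t) • -A) := by
    funext t; rw [dil, neg_smul_neg]
  rw [this]
  exact (tendsto_exp_smul_neg_atTop hA).comp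
    (tendsto_neg_atBot_atTop.comp Real.tendsto_log_nhdsGT_zero)

theorem tendsto_dil_mulVec_nhdsGT_zero
    (hA : ∀ μ ∈ spectrum ℂ (A.map (algebraMap ℝ ℂ)), 0 < μ.re) (ξ : Fin 2 → ℝ) :
    Tendsto (fun t => dil A t *ᵥ ξ) (𝓝[>] 0) (𝓝 0) := by
  have := ((continuous_id.matrix_mulVec (continuous_const (y := ξ))).tendsto 0).comp
    (tendsto_dil_nhdsGT_zero hA)
  rwa [id, zero_mulVec] at this

section LinftyNorm
attribute [local instance] Matrix.linftyOpNormedRing Matrix.linftyOpNormedAlgebra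

theorem continuousOn_dil : ContinuousOn (dil A) (Ioi 0) :=
  NormedSpace.exp_continuous.comp_continuousOn
    ((Real.continuousOn_log.mono fun _ ht => ne_of_gt ht).smul continuousOn_const)

theorem tendsto_dil_mulVec_atTop_cobounded
    (hA : ∀ μ ∈ spectrum ℂ (A.map (algebraMap ℝ ℂ)), 0 < μ.re) {ξ : Fin 2 → ℝ} (hξ : ξ ≠ 0) :
    Tendsto (fun t => dil A t *ᵥ ξ) atTop (Bornology.cobounded _) := by
  have hle : ∀ᶠ t in atTop, ‖ξ‖ ≤ ‖dil A t⁻¹‖ * ‖dil A t *ᵥ ξ‖ :=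
    (eventually_gt_atTop 0).mono fun t ht => calc
      ‖ξ‖ = ‖dil A t⁻¹ *ᵥ (dil A t *ᵥ ξ)‖ := by rw [dil_inv_mulVec_dil_mulVec ht]
      _ ≤ ‖dil A t⁻¹‖ * ‖dil A t *ᵥ ξ‖ := linfty_opNorm_mulVec _ _
  have hξ' : 0 < ‖ξ‖ := norm_pos_iff.2 hξ
  have hpos : ∀ᶠ t in atTop, 0 < ‖dil A t⁻¹‖ :=
    hle.mono fun t h => pos_of_mul_pos_left (hξ'.trans_le h) (norm_nonneg _)
  have hnorm : Tendsto (fun t => ‖dil A t⁻¹‖) atTop (𝓝[>] 0) :=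
    tendsto_nhdsWithin_iff.2 ⟨by simpa using
      ((tendsto_dil_nhdsGT_zero hA).comp tendsto_inv_atTop_nhdsGT_zero).norm, hpos⟩
  rw [← tendsto_norm_atTop_iff_cobounded]
  refine tendsto_atTop_mono' _ ?_ (hnorm.inv_tendsto_nhdsGT_zero.const_mul_atTop hξ')
  filter_upwards [hle, hpos] with t h hp
  rwa [Pi.inv_apply, ← div_eq_mul_inv, div_le_iff₀' hp]

end LinftyNorm

end Dilation

theorem IsPreconnected.subset_of_disjoint_frontier {X : Type*} [TopologicalSpace X]
    {S V : Set X} (hS : IsPreconnected S) (hV : IsOpen V) (hne : (S ∩ V).Nonempty)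
    (hfr : Disjoint S (frontier V)) : S ⊆ V :=
  hS.subset_of_closure_inter_subset hV hne fun x ⟨hc, hx⟩ => by
    by_contra h
    exact hfr.notMem_of_mem_left hx (hV.frontier_eq ▸ ⟨hc, h⟩)

theorem mem_iff_lt_and_mem_closure_iff_le {X : Type*} [TopologicalSpace X] {U : Set X}
    {γ : ℝ → X} {t₀ : ℝ} (hU : IsOpen U) (hγ : ContinuousOn γ (Ioi 0)) (ht₀ : 0 < t₀)
    (hstart : ∃ᶠ t in 𝓝[>] 0, γ t ∈ U) (hend : ∃ᶠ t in atTop, γ t ∉ closure U)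
    (hfr : ∀ t, 0 < t → (γ t ∈ frontier U ↔ t = t₀)) {t : ℝ} (ht : 0 < t) :
    (γ t ∈ U ↔ t < t₀) ∧ (γ t ∈ closure U ↔ t ≤ t₀) := by
  have before : γ '' Ioo 0 t₀ ⊆ U := by
    refine (isPreconnected_Ioo.image γ (hγ.mono Ioo_subset_Ioi_self)).subset_of_disjoint_frontier
      hU ?_ ?_
    · obtain ⟨s, hs, hs'⟩ := (hstart.and_eventually (Ioo_mem_nhdsGT ht₀)).exists
      exact ⟨γ s, mem_image_of_mem γ hs', hs⟩
    · rw [disjoint_left]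
      rintro _ ⟨s, hs, rfl⟩ h
      exact hs.2.ne ((hfr s hs.1).1 h)
  have after : γ '' Ioi t₀ ⊆ (closure U)ᶜ := by
    refine (isPreconnected_Ioi.image γ (hγ.mono (Ioi_subset_Ioi ht₀.le)))
      |>.subset_of_disjoint_frontier isClosed_closure.isOpen_compl ?_ ?_
    · obtain ⟨s, hs, hs'⟩ := (hend.and_eventually (eventually_gt_atTop t₀)).exists
      exact ⟨γ s, mem_image_of_mem γ hs', hs⟩
    · rw [disjoint_left, frontier_compl]
      rintro _ ⟨s, hs, rfl⟩ h
      exact hs.ne' ((hfr s (ht₀.trans hs)).1 (frontier_closure_subset h))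
  have at_t₀ : γ t₀ ∈ closure U \ U := hU.frontier_eq ▸ (hfr t₀ ht₀).2 rfl
  rcases lt_trichotomy t t₀ with h | rfl | h
  · have := before ⟨t, ⟨ht, h⟩, rfl⟩
    exact ⟨iff_of_true this h, iff_of_true (subset_closure this) h.le⟩
  · exact ⟨iff_of_false at_t₀.2 (lt_irrefl t), iff_of_true at_t₀.1 le_rfl⟩
  · have := after ⟨t, h, rfl⟩
    exact ⟨iff_of_false (fun h' => this (subset_closure h')) h.not_gt,
      iff_of_false this h.not_ge⟩

theorem continuous_of_isOpen_setOf_lt_of_isClosed_setOf_le {X : Type*} [TopologicalSpace X]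
    [T1Space X] {f : X → ℝ} {x₀ : X} (hx₀ : f x₀ = 0) (hpos : ∀ x ≠ x₀, 0 < f x)
    (hlt : ∀ b, 0 < b → IsOpen {x | f x < b}) (hle : ∀ b, 0 < b → IsClosed {x | f x ≤ b}) :
    Continuous f := by
  have hnonneg (x : X) : 0 ≤ f x := by
    rcases eq_or_ne x x₀ with rfl | hx
    · exact hx₀.ge
    · exact (hpos x hx).le
  refine continuous_iff_lower_upperSemicontinuous.2 ⟨lowerSemicontinuous_iff_isClosed_preimage.2
    fun b => ?_, upperSemicontinuous_iff_isOpen_preimage.2 fun b => ?_⟩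
  · rcases lt_or_ge 0 b with hb | hb
    · exact hle b hb
    · refine ((subsingleton_singleton (a := x₀)).anti fun x (hx : f x ≤ b) => ?_).isClosed
      by_contra h
      exact (hpos x h).not_ge (hx.trans hb)
  · rcases lt_or_ge 0 b with hb | hb
    · exact hlt b hb
    · convert isOpen_empty
      exact eq_empty_of_forall_notMem fun x (hx : f x < b) => (hnonneg x).not_gt (hx.trans_le hb)

section NormFunction

variable {Ω : Set (Fin 2 → ℝ)} {A : Matrix (Fin 2) (Fin 2) ℝ} {ρ : (Fin 2 → ℝ) → ℝ}

theorem dil_mulVec_mem_iff (hΩo : IsOpen Ω) (hΩb : Bornology.IsBounded Ω)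
    (h0 : (0 : Fin 2 → ℝ) ∈ Ω) (hA : ∀ μ ∈ spectrum ℂ (A.map (algebraMap ℝ ℂ)), 0 < μ.re)
    (hcompat : ∀ ξ : Fin 2 → ℝ, ξ ≠ 0 → ∃! t : ℝ, 0 < t ∧ (dil A t).mulVec ξ ∈ frontier Ω)
    (hρ : ∀ ξ : Fin 2 → ℝ, ξ ≠ 0 → 0 < ρ ξ ∧ (dil A (ρ ξ)⁻¹).mulVec ξ ∈ frontier Ω)
    {ξ : Fin 2 → ℝ} (hξ : ξ ≠ 0) {t : ℝ} (ht : 0 < t) :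
    (dil A t *ᵥ ξ ∈ Ω ↔ t < (ρ ξ)⁻¹) ∧ (dil A t *ᵥ ξ ∈ closure Ω ↔ t ≤ (ρ ξ)⁻¹) := by
  obtain ⟨hρpos, hρfr⟩ := hρ ξ hξ
  refine mem_iff_lt_and_mem_closure_iff_le hΩo
    ((continuous_id.matrix_mulVec continuous_const).comp_continuousOn continuousOn_dil)
    (inv_pos.2 hρpos)
    ((tendsto_dil_mulVec_nhdsGT_zero hA ξ).eventually (hΩo.mem_nhds h0)).frequently
    ((tendsto_dil_mulVec_atTop_cobounded hA hξ).eventually hΩb.closure).frequently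
    (fun s hs => ⟨fun h => (hcompat ξ hξ).unique ⟨hs, h⟩ ⟨inv_pos.2 hρpos, hρfr⟩,
      fun h => h ▸ hρfr⟩) ht

theorem preimage_dil_inv_eq (hΩo : IsOpen Ω) (hΩb : Bornology.IsBounded Ω)
    (h0 : (0 : Fin 2 → ℝ) ∈ Ω) (hA : ∀ μ ∈ spectrum ℂ (A.map (algebraMap ℝ ℂ)), 0 < μ.re)
    (hcompat : ∀ ξ : Fin 2 → ℝ, ξ ≠ 0 → ∃! t : ℝ, 0 < t ∧ (dil A t).mulVec ξ ∈ frontier Ω)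
    (hρ0 : ρ 0 = 0)
    (hρ : ∀ ξ : Fin 2 → ℝ, ξ ≠ 0 → 0 < ρ ξ ∧ (dil A (ρ ξ)⁻¹).mulVec ξ ∈ frontier Ω)
    {b : ℝ} (hb : 0 < b) :
    (dil A b⁻¹ *ᵥ ·) ⁻¹' Ω = {ξ | ρ ξ < b} ∧
      (dil A b⁻¹ *ᵥ ·) ⁻¹' closure Ω = {ξ | ρ ξ ≤ b} := by
  constructor <;> ext ξ <;> rcases eq_or_ne ξ 0 with rfl | hξ
  · simp only [mem_preimage, mulVec_zero, mem_ofPred_eq, hρ0, hb, h0]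
  · simpa [inv_lt_inv₀ hb (hρ ξ hξ).1] using
      (dil_mulVec_mem_iff hΩo hΩb h0 hA hcompat hρ hξ (inv_pos.2 hb)).1
  · simp only [mem_preimage, mulVec_zero, mem_ofPred_eq, hρ0, hb.le, subset_closure h0]
  · simpa [inv_le_inv₀ hb (hρ ξ hξ).1] using
      (dil_mulVec_mem_iff hΩo hΩb h0 hA hcompat hρ hξ (inv_pos.2 hb)).2

end NormFunction

theorem rho_continuous_and_level_sets_general (Ω : Set (Fin 2 → ℝ))
    (hΩo : IsOpen Ω) (hΩb : Bornology.IsBounded Ω)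
    (h0 : (0 : Fin 2 → ℝ) ∈ Ω)
    (A : Matrix (Fin 2) (Fin 2) ℝ)
    (hA : ∀ μ ∈ spectrum ℂ (A.map (algebraMap ℝ ℂ)), 0 < μ.re)
    (hcompat : ∀ ξ : Fin 2 → ℝ, ξ ≠ 0 →
      ∃! t : ℝ, 0 < t ∧ (dil A t).mulVec ξ ∈ frontier Ω)
    (ρ : (Fin 2 → ℝ) → ℝ) (hρ0 : ρ 0 = 0)
    (hρ : ∀ ξ : Fin 2 → ℝ, ξ ≠ 0 →
      0 < ρ ξ ∧ (dil A (ρ ξ)⁻¹).mulVec ξ ∈ frontier Ω) :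
    Continuous ρ ∧ {ξ | ρ ξ < 1} = Ω ∧ {ξ | ρ ξ = 1} = frontier Ω := by
  have hpre (b : ℝ) (hb : 0 < b) := preimage_dil_inv_eq hΩo hΩb h0 hA hcompat hρ0 hρ hb
  have hcont (b : ℝ) : Continuous (dil A b⁻¹ *ᵥ ·) :=
    continuous_const.matrix_mulVec continuous_id
  obtain ⟨hlt, hle⟩ := hpre 1 one_pos
  simp only [inv_one, dil_one, one_mulVec, preimage_id'] at hlt hle
  refine ⟨continuous_of_isOpen_setOf_lt_of_isClosed_setOf_le hρ0 (fun ξ hξ => (hρ ξ hξ).1)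
    (fun b hb => (hpre b hb).1 ▸ hΩo.preimage (hcont b))
    (fun b hb => (hpre b hb).2 ▸ isClosed_closure.preimage (hcont b)), hlt.symm, ?_⟩
  rw [hΩo.frontier_eq, hle, hlt]
  ext ξ
  simp only [mem_ofPred_eq, Set.mem_sdiff, not_lt, le_antisymm_iff]

theorem rho_continuous_and_level_sets (Ω : Set (Fin 2 → ℝ))
    (hΩo : IsOpen Ω) (hΩc : Convex ℝ Ω) (hΩb : Bornology.IsBounded Ω)
    (h0 : (0 : Fin 2 → ℝ) ∈ Ω)
    (A : Matrix (Fin 2) (Fin 2) ℝ)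
    (hA : ∀ μ ∈ spectrum ℂ (A.map (algebraMap ℝ ℂ)), 0 < μ.re)
    (hcompat : ∀ ξ : Fin 2 → ℝ, ξ ≠ 0 →
      ∃! t : ℝ, 0 < t ∧ (dil A t).mulVec ξ ∈ frontier Ω)
    (ρ : (Fin 2 → ℝ) → ℝ) (hρ0 : ρ 0 = 0)
    (hρ : ∀ ξ : Fin 2 → ℝ, ξ ≠ 0 →
      0 < ρ ξ ∧ (dil A (ρ ξ)⁻¹).mulVec ξ ∈ frontier Ω) :
    Continuous ρ ∧ {ξ | ρ ξ < 1} = Ω ∧ {ξ | ρ ξ = 1} = frontier Ω :=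
  rho_continuous_and_level_sets_general Ω hΩo hΩb h0 A hA hcompat ρ hρ0 hρ
end

section
/- Let T : L²(ℝ²) → L²(ℝ²) be sublinear with ‖Tf‖₂ ≤ C₂ (log N)^{a+1/2} ‖f‖₂, weak-type (1,1) with constant C₁·N, and bounded on L^∞ with constant 1. Then T is bounded on L² (strong type) — and more generally, interpolation of the weak-type (2,2) bound |{Tf > α}| ≤ C (log N)^{2a+1} ‖f‖₂²/α², the weak (1,1) bound with constant CN, and the L^∞ bound yields ‖Tf‖₂ ≲ (log N)^{β} ‖f‖₂ for some β = β(a) > 0, with implied constant independent of N. -/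
/-!
Marcinkiewicz interpolation at the dyadic levels `t = 2ⁿ`. Split `f` into the parts where
`|f| > N t`, where `t < |f| ≤ N t` and where `|f| ≤ t`; by sublinearity `{T f > 3t}` is covered
by the three level sets of `T` applied to the parts. The `L^∞` bound makes the last one null, the
weak `(1,1)` bound controls the first and the weak `(2,2)` bound the middle one. Summed over `n`,
the weak `(1,1)` terms form a geometric series in which the factor `N` cancels, while each value
of `|f|` lies in the middle window for at most `log₂ N + 1` levels. Hence
`‖T f‖₂² ≲ C (log N) ^ (2a + 2) ‖f‖₂²`.
-/

open MeasureTheory Real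
open scoped ENNReal NNReal

section Interpolation

open Set

lemma tsum_ite_two_zpow_lt_le (y : ℝ) :
    ∑' n : ℤ, (if (2 : ℝ) ^ n < y then ENNReal.ofReal (2 ^ n) else 0) ≤ ENNReal.ofReal (2 * y) := by
  rcases le_or_gt y 0 with hy | hy
  · have hzero (n : ℤ) : ¬ (2 : ℝ) ^ n < y := fun h => (h.trans_le hy).not_ge (by positivity)
    simp [hzero]
  obtain ⟨n₀, hn₀, hn₀'⟩ := exists_mem_Ioc_zpow hy one_lt_two
  set g : ℤ → ℝ≥0∞ := fun n => if (2 : ℝ) ^ n < y then ENNReal.ofReal (2 ^ n) else 0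
  have hg_above (k : ℕ) : g (n₀ - -(k + 1 : ℤ)) = 0 :=
    if_neg (not_lt.2 (hn₀'.trans (zpow_le_zpow_right₀ one_le_two (by omega))))
  have hg_below (k : ℕ) : g (n₀ - k) ≤ ENNReal.ofReal (2 ^ n₀) * 2⁻¹ ^ k := by
    refine (ite_le_sup _ _ _).trans (sup_le (le_of_eq ?_) zero_le)
    rw [zpow_sub₀ two_ne_zero, zpow_natCast, div_eq_mul_inv, ← inv_pow,
      ENNReal.ofReal_mul (by positivity), ENNReal.ofReal_pow (by norm_num),
      ENNReal.ofReal_inv_of_pos two_pos, ENNReal.ofReal_ofNat]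
  calc ∑' n, g n = ∑' m : ℤ, g (n₀ - m) := ((Equiv.subLeft n₀).tsum_eq g).symm
    _ = ∑' k : ℕ, g (n₀ - k) + ∑' k : ℕ, g (n₀ - -(k + 1 : ℤ)) :=
      tsum_of_nat_of_neg_add_one ENNReal.summable ENNReal.summable
    _ ≤ ∑' k : ℕ, ENNReal.ofReal (2 ^ n₀) * 2⁻¹ ^ k + 0 := by
      simp only [hg_above, tsum_zero]
      gcongr with k
      exact hg_below k
    _ = ENNReal.ofReal (2 * 2 ^ n₀) := by
      rw [add_zero, ENNReal.tsum_mul_left, ENNReal.tsum_geometric, ENNReal.one_sub_inv_two,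
        inv_inv, ENNReal.ofReal_mul zero_le_two, ENNReal.ofReal_ofNat, mul_comm]
    _ ≤ ENNReal.ofReal (2 * y) := by gcongr

lemma tsum_ite_mem_Ioc_two_zpow_le {R : ℝ} (hR : 1 ≤ R) (y : ℝ) :
    ∑' n : ℤ, (if y ∈ Ioc ((2 : ℝ) ^ n) (R * 2 ^ n) then (1 : ℝ≥0∞) else 0)
      ≤ ENNReal.ofReal (logb 2 R + 1) := by
  rcases le_or_gt y 0 with hy | hy
  · have hzero (n : ℤ) : y ∉ Ioc ((2 : ℝ) ^ n) (R * 2 ^ n) :=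
      fun h => (h.1.trans_le hy).not_ge (by positivity)
    simp [hzero]
  obtain ⟨n₀, hn₀, hn₀'⟩ := exists_mem_Ioc_zpow hy one_lt_two
  set K : ℤ := ⌊logb 2 R⌋
  have hK : 0 ≤ K := Int.floor_nonneg.2 (logb_nonneg one_lt_two hR)
  have hwindow (n : ℤ) (hn : y ∈ Ioc ((2 : ℝ) ^ n) (R * 2 ^ n)) : n ∈ Finset.Icc (n₀ - K) n₀ := by
    have hlow : ((n₀ - n : ℤ) : ℝ) < logb 2 R := by
      rw [lt_logb_iff_rpow_lt one_lt_two (by linarith), rpow_intCast, zpow_sub₀ two_ne_zero,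
        div_lt_iff₀ (by positivity)]
      exact hn₀.trans_le hn.2
    have hhigh : (2 : ℝ) ^ n < 2 ^ (n₀ + 1) := hn.1.trans_le hn₀'
    rw [zpow_lt_zpow_iff_right₀ one_lt_two] at hhigh
    have := Int.le_floor.2 hlow.le
    rw [Finset.mem_Icc]
    omega
  calc ∑' n : ℤ, (if y ∈ Ioc ((2 : ℝ) ^ n) (R * 2 ^ n) then (1 : ℝ≥0∞) else 0)
      ≤ ∑' n : ℤ, (if n ∈ Finset.Icc (n₀ - K) n₀ then (1 : ℝ≥0∞) else 0) := by
        gcongr with n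
        split_ifs <;> simp_all
    _ = (K + 1).toNat := by
        rw [tsum_eq_sum (s := Finset.Icc (n₀ - K) n₀) (fun n hn => if_neg hn), Finset.sum_ite_mem,
          Finset.inter_self, Finset.sum_const, Int.card_Icc, nsmul_one]
        congr 2
        ring
    _ ≤ ENNReal.ofReal (logb 2 R + 1) := by
        rw [← ENNReal.ofReal_natCast]
        gcongr
        have hcast : ((K + 1).toNat : ℝ) = K + 1 := by
          exact_mod_cast Int.toNat_of_nonneg (by omega : 0 ≤ K + 1)
        linarith [Int.floor_le (logb 2 R)]

lemma sq_mul_mul_div_add_div_sq {s : ℝ≥0∞} (h0 : s ≠ 0) (htop : s ≠ ∞) (k A B X Y : ℝ≥0∞) :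
    (k * s) ^ 2 * (B * X / s + A * Y / s ^ 2) = k ^ 2 * (B * (s * X) + A * Y) := by
  have h1 : s * s⁻¹ = 1 := ENNReal.mul_inv_cancel h0 htop
  have h2 : s ^ 2 * (s ^ 2)⁻¹ = 1 :=
    ENNReal.mul_inv_cancel (pow_ne_zero 2 h0) (ENNReal.pow_ne_top htop)
  calc (k * s) ^ 2 * (B * X / s + A * Y / s ^ 2)
      = k ^ 2 * (B * (s * X) * (s * s⁻¹) + A * Y * (s ^ 2 * (s ^ 2)⁻¹)) := by
        simp only [div_eq_mul_inv]; ring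
    _ = k ^ 2 * (B * (s * X) + A * Y) := by rw [h1, h2, mul_one, mul_one]

variable {α : Type*}

open Classical in
noncomputable def levelPart (s : Set ℝ) (f : α → ℝ) (x : α) : ℝ :=
  if |f x| ∈ s then f x else 0

lemma levelPart_Ioi_add_Ioc_add_Iic {s t : ℝ} (hst : s ≤ t) (f : α → ℝ) :
    levelPart (Ioi t) f + levelPart (Ioc s t) f + levelPart (Iic s) f = f := by
  ext x
  simp only [Pi.add_apply, levelPart, mem_Ioi, mem_Ioc, mem_Iic]
  split_ifs <;> grind

lemma abs_levelPart_le (s : Set ℝ) (f : α → ℝ) (x : α) : |levelPart s f x| ≤ |f x| := by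
  unfold levelPart
  split_ifs <;> simp

open Classical in
lemma enorm_levelPart (s : Set ℝ) (f : α → ℝ) (x : α) :
    ‖levelPart s f x‖ₑ = if |f x| ∈ s then ‖f x‖ₑ else 0 := by
  unfold levelPart
  split_ifs <;> simp

variable [MeasurableSpace α] {μ : Measure α}

open Classical in
lemma aestronglyMeasurable_levelPart {s : Set ℝ} (hs : MeasurableSet s) {f : α → ℝ}
    (hf : AEStronglyMeasurable f μ) : AEStronglyMeasurable (levelPart s f) μ :=
  ((Measurable.ite (measurable_abs hs) measurable_id measurable_const).comp_aemeasurable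
    hf.aemeasurable).aestronglyMeasurable

lemma memLp_levelPart {s : Set ℝ} (hs : MeasurableSet s) {f : α → ℝ} {p : ℝ≥0∞}
    (hf : MemLp f p μ) : MemLp (levelPart s f) p μ :=
  hf.of_le (aestronglyMeasurable_levelPart hs hf.1)
    (ae_of_all _ fun x => by simpa using abs_levelPart_le s f x)

lemma memLp_one_levelPart_Ioi {f : α → ℝ} (hf : MemLp f 2 μ) {t : ℝ} (ht : 0 < t) :
    MemLp (levelPart (Ioi t) f) 1 μ := by
  rw [memLp_one_iff_integrable]
  refine (hf.integrable_sq.const_mul t⁻¹).mono'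
    (aestronglyMeasurable_levelPart measurableSet_Ioi hf.1) (ae_of_all _ fun x => ?_)
  rw [Real.norm_eq_abs, levelPart]
  split_ifs with h
  · rw [inv_mul_eq_div, le_div_iff₀ ht, ← sq_abs, sq]
    exact mul_le_mul_of_nonneg_left (le_of_lt h) (abs_nonneg _)
  · simp only [abs_zero]; positivity

lemma eLpNorm_levelPart_Iic_top_le {t : ℝ} (ht : 0 ≤ t) (f : α → ℝ) :
    eLpNorm (levelPart (Iic t) f) ⊤ μ ≤ ENNReal.ofReal t := by
  rw [eLpNorm_exponent_top]
  refine eLpNormEssSup_le_of_ae_bound (ae_of_all _ fun x => ?_)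
  rw [Real.norm_eq_abs, levelPart]
  split_ifs with h
  · exact h
  · simpa using ht

lemma eLpNorm_two_sq_eq_lintegral (f : α → ℝ) :
    eLpNorm f 2 μ ^ 2 = ∫⁻ x, ‖f x‖ₑ ^ 2 ∂μ := by
  simpa using eLpNorm_nnreal_pow_eq_lintegral (f := f) (μ := μ) (p := 2) two_ne_zero

lemma tsum_zpow_mul_eLpNorm_levelPart_Ioi_le {R : ℝ} (hR : 0 < R) {f : α → ℝ}
    (hf : AEStronglyMeasurable f μ) :
    ∑' n : ℤ, ENNReal.ofReal (2 ^ n) * eLpNorm (levelPart (Ioi (R * 2 ^ n)) f) 1 μ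
      ≤ ENNReal.ofReal (2 / R) * eLpNorm f 2 μ ^ 2 := by
  have hpt (x : α) : ∑' n : ℤ, ENNReal.ofReal (2 ^ n) * ‖levelPart (Ioi (R * 2 ^ n)) f x‖ₑ
      ≤ ENNReal.ofReal (2 / R) * ‖f x‖ₑ ^ 2 := by
    have hterm (n : ℤ) : ENNReal.ofReal (2 ^ n) * ‖levelPart (Ioi (R * 2 ^ n)) f x‖ₑ
        = ‖f x‖ₑ * if (2 : ℝ) ^ n < |f x| / R then ENNReal.ofReal (2 ^ n) else 0 := by
      simp only [enorm_levelPart, mem_Ioi, lt_div_iff₀ hR, mul_comm R]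
      split_ifs <;> simp [mul_comm]
    calc ∑' n : ℤ, ENNReal.ofReal (2 ^ n) * ‖levelPart (Ioi (R * 2 ^ n)) f x‖ₑ
        ≤ ‖f x‖ₑ * ENNReal.ofReal (2 * (|f x| / R)) := by
          rw [tsum_congr hterm, ENNReal.tsum_mul_left]
          gcongr
          exact tsum_ite_two_zpow_lt_le _
      _ = ENNReal.ofReal (2 / R) * ‖f x‖ₑ ^ 2 := by
          rw [Real.enorm_eq_ofReal_abs, ← ENNReal.ofReal_pow (abs_nonneg _),
            ← ENNReal.ofReal_mul (abs_nonneg _), ← ENNReal.ofReal_mul (by positivity)]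
          ring_nf
  calc ∑' n : ℤ, ENNReal.ofReal (2 ^ n) * eLpNorm (levelPart (Ioi (R * 2 ^ n)) f) 1 μ
      = ∫⁻ x, ∑' n : ℤ, ENNReal.ofReal (2 ^ n) * ‖levelPart (Ioi (R * 2 ^ n)) f x‖ₑ ∂μ := by
        rw [lintegral_tsum fun n =>
          ((aestronglyMeasurable_levelPart measurableSet_Ioi hf).enorm.const_mul _)]
        refine tsum_congr fun n => ?_
        rw [eLpNorm_one_eq_lintegral_enorm,
          lintegral_const_mul'' _ (aestronglyMeasurable_levelPart measurableSet_Ioi hf).enorm]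
    _ ≤ ∫⁻ x, ENNReal.ofReal (2 / R) * ‖f x‖ₑ ^ 2 ∂μ := lintegral_mono hpt
    _ = ENNReal.ofReal (2 / R) * eLpNorm f 2 μ ^ 2 := by
        rw [lintegral_const_mul'' _ (hf.enorm.pow_const 2), eLpNorm_two_sq_eq_lintegral]

lemma tsum_eLpNorm_levelPart_Ioc_sq_le {R : ℝ} (hR : 1 ≤ R) {f : α → ℝ}
    (hf : AEStronglyMeasurable f μ) :
    ∑' n : ℤ, eLpNorm (levelPart (Ioc (2 ^ n) (R * 2 ^ n)) f) 2 μ ^ 2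
      ≤ ENNReal.ofReal (logb 2 R + 1) * eLpNorm f 2 μ ^ 2 := by
  have hpt (x : α) : ∑' n : ℤ, ‖levelPart (Ioc (2 ^ n) (R * 2 ^ n)) f x‖ₑ ^ 2
      ≤ ENNReal.ofReal (logb 2 R + 1) * ‖f x‖ₑ ^ 2 := by
    have hterm (n : ℤ) : ‖levelPart (Ioc (2 ^ n) (R * 2 ^ n)) f x‖ₑ ^ 2
        = ‖f x‖ₑ ^ 2 * if |f x| ∈ Ioc ((2 : ℝ) ^ n) (R * 2 ^ n) then 1 else 0 := by
      rw [enorm_levelPart]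
      split_ifs <;> simp
    rw [tsum_congr hterm, ENNReal.tsum_mul_left, mul_comm]
    gcongr
    exact tsum_ite_mem_Ioc_two_zpow_le hR _
  calc ∑' n : ℤ, eLpNorm (levelPart (Ioc (2 ^ n) (R * 2 ^ n)) f) 2 μ ^ 2
      = ∫⁻ x, ∑' n : ℤ, ‖levelPart (Ioc (2 ^ n) (R * 2 ^ n)) f x‖ₑ ^ 2 ∂μ := by
        rw [lintegral_tsum fun n =>
          ((aestronglyMeasurable_levelPart measurableSet_Ioc hf).enorm.pow_const 2)]
        simp_rw [eLpNorm_two_sq_eq_lintegral]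
    _ ≤ ∫⁻ x, ENNReal.ofReal (logb 2 R + 1) * ‖f x‖ₑ ^ 2 ∂μ := lintegral_mono hpt
    _ = ENNReal.ofReal (logb 2 R + 1) * eLpNorm f 2 μ ^ 2 := by
        rw [lintegral_const_mul'' _ (hf.enorm.pow_const 2), eLpNorm_two_sq_eq_lintegral]

lemma lintegral_sq_le_tsum_measure_lt (g : α → ℝ) {c : ℝ} (hc : 0 < c) :
    ∫⁻ x, ‖g x‖ₑ ^ 2 ∂μ
      ≤ ∑' n : ℤ, ENNReal.ofReal (2 * c * 2 ^ n) ^ 2 * μ {x | c * 2 ^ n < |g x|} := by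
  -- `g` need not be measurable, so its level sets are replaced by measurable hulls.
  set t : ℤ → Set α := fun n => toMeasurable μ {x | c * 2 ^ n < |g x|}
  have hpt (x : α) :
      ‖g x‖ₑ ^ 2 ≤ ∑' n, (t n).indicator (fun _ => ENNReal.ofReal (2 * c * 2 ^ n) ^ 2) x := by
    rcases eq_or_ne (g x) 0 with h0 | h0
    · simp [h0]
    obtain ⟨n, hlt, hle⟩ := exists_mem_Ioc_zpow (div_pos (abs_pos.2 h0) hc) one_lt_two
    rw [lt_div_iff₀ hc] at hlt
    rw [div_le_iff₀ hc, zpow_add_one₀ two_ne_zero] at hle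
    have hx : x ∈ t n := subset_toMeasurable _ _ (by simpa [mul_comm] using hlt)
    calc ‖g x‖ₑ ^ 2 ≤ ENNReal.ofReal (2 * c * 2 ^ n) ^ 2 := by
          rw [Real.enorm_eq_ofReal_abs]
          gcongr
          linarith
      _ = (t n).indicator (fun _ => ENNReal.ofReal (2 * c * 2 ^ n) ^ 2) x :=
          (indicator_of_mem hx (fun _ => ENNReal.ofReal (2 * c * 2 ^ n) ^ 2)).symm
      _ ≤ _ := ENNReal.le_tsum n
  calc ∫⁻ x, ‖g x‖ₑ ^ 2 ∂μ
      ≤ ∫⁻ x, ∑' n, (t n).indicator (fun _ => ENNReal.ofReal (2 * c * 2 ^ n) ^ 2) x ∂μ :=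
        lintegral_mono hpt
    _ = ∑' n : ℤ, ENNReal.ofReal (2 * c * 2 ^ n) ^ 2 * μ {x | c * 2 ^ n < |g x|} := by
        rw [lintegral_tsum fun n =>
          (measurable_const.indicator (measurableSet_toMeasurable _ _)).aemeasurable]
        refine tsum_congr fun n => ?_
        rw [lintegral_indicator_const (measurableSet_toMeasurable _ _), measure_toMeasurable]

lemma measure_lt_eq_zero_of_eLpNorm_top_le {g : α → ℝ} {t : ℝ} (ht : 0 ≤ t)
    (hg : eLpNorm g ⊤ μ ≤ ENNReal.ofReal t) : μ {x | t < g x} = 0 := by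
  rw [eLpNorm_exponent_top] at hg
  have hbound : ∀ᵐ x ∂μ, ¬ t < g x := by
    filter_upwards [enorm_ae_le_eLpNormEssSup g μ] with x hx
    have habs := hx.trans hg
    rw [Real.enorm_eq_ofReal_abs, ENNReal.ofReal_le_ofReal_iff ht] at habs
    exact not_lt.2 ((le_abs_self _).trans habs)
  simpa using ae_iff.1 hbound

variable {T : (α → ℝ) → α → ℝ}

lemma measure_lt_add_le (hsub : ∀ f g x, T (f + g) x ≤ T f x + T g x) (f g : α → ℝ) (a b : ℝ) :
    μ {x | a + b < T (f + g) x} ≤ μ {x | a < T f x} + μ {x | b < T g x} := by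
  refine (measure_mono fun x (hx : a + b < T (f + g) x) => ?_).trans (measure_union_le _ _)
  by_contra h
  simp only [mem_union, mem_ofPred_eq, not_or, not_lt] at h
  linarith [hsub f g x]

lemma measure_three_mul_lt_le {A B : ℝ≥0∞}
    (hsub : ∀ f g x, T (f + g) x ≤ T f x + T g x)
    (hweak2 : ∀ f, MemLp f 2 μ → ∀ t : ℝ, 0 < t →
      μ {x | t < T f x} ≤ A * eLpNorm f 2 μ ^ 2 / ENNReal.ofReal t ^ 2)
    (hweak1 : ∀ f, MemLp f 1 μ → ∀ t : ℝ, 0 < t →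
      μ {x | t < T f x} ≤ B * eLpNorm f 1 μ / ENNReal.ofReal t)
    (hinf : ∀ f, eLpNorm (T f) ⊤ μ ≤ eLpNorm f ⊤ μ)
    {R t : ℝ} (hR : 1 ≤ R) (ht : 0 < t) {f : α → ℝ} (hf : MemLp f 2 μ) :
    μ {x | 3 * t < T f x}
      ≤ B * eLpNorm (levelPart (Ioi (R * t)) f) 1 μ / ENNReal.ofReal t
        + A * eLpNorm (levelPart (Ioc t (R * t)) f) 2 μ ^ 2 / ENNReal.ofReal t ^ 2 := by
  have hlow : μ {x | t < T (levelPart (Iic t) f) x} = 0 :=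
    measure_lt_eq_zero_of_eLpNorm_top_le ht.le
      ((hinf _).trans (eLpNorm_levelPart_Iic_top_le ht.le f))
  calc μ {x | 3 * t < T f x}
      = μ {x | t + t + t < T (levelPart (Ioi (R * t)) f + levelPart (Ioc t (R * t)) f
          + levelPart (Iic t) f) x} := by
        rw [levelPart_Ioi_add_Ioc_add_Iic (le_mul_of_one_le_left ht.le hR)]
        ring_nf
    _ ≤ μ {x | t < T (levelPart (Ioi (R * t)) f) x} + μ {x | t < T (levelPart (Ioc t (R * t)) f) x}
          + μ {x | t < T (levelPart (Iic t) f) x} :=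
        (measure_lt_add_le hsub _ _ _ _).trans (add_le_add_left (measure_lt_add_le hsub _ _ _ _) _)
    _ ≤ _ := by
        rw [hlow, add_zero]
        exact add_le_add (hweak1 _ (memLp_one_levelPart_Ioi hf (by positivity)) t ht)
          (hweak2 _ (memLp_levelPart measurableSet_Ioc hf) t ht)

theorem eLpNorm_two_sq_le_of_weakType {A B : ℝ≥0∞}
    (hpos : ∀ f x, 0 ≤ T f x)
    (hsub : ∀ f g x, T (f + g) x ≤ T f x + T g x)
    (hweak2 : ∀ f, MemLp f 2 μ → ∀ t : ℝ, 0 < t →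
      μ {x | t < T f x} ≤ A * eLpNorm f 2 μ ^ 2 / ENNReal.ofReal t ^ 2)
    (hweak1 : ∀ f, MemLp f 1 μ → ∀ t : ℝ, 0 < t →
      μ {x | t < T f x} ≤ B * eLpNorm f 1 μ / ENNReal.ofReal t)
    (hinf : ∀ f, eLpNorm (T f) ⊤ μ ≤ eLpNorm f ⊤ μ)
    {R : ℝ} (hR : 1 ≤ R) {f : α → ℝ} (hf : MemLp f 2 μ) :
    eLpNorm (T f) 2 μ ^ 2
      ≤ 36 * (B * ENNReal.ofReal (2 / R) + A * ENNReal.ofReal (logb 2 R + 1))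
        * eLpNorm f 2 μ ^ 2 := by
  have hlevel (n : ℤ) :
      ENNReal.ofReal (2 * 3 * 2 ^ n) ^ 2 * μ {x | 3 * 2 ^ n < |T f x|}
        ≤ 36 * (B * (ENNReal.ofReal (2 ^ n) * eLpNorm (levelPart (Ioi (R * 2 ^ n)) f) 1 μ)
          + A * eLpNorm (levelPart (Ioc (2 ^ n) (R * 2 ^ n)) f) 2 μ ^ 2) := by
    have h2n : (0 : ℝ) < 2 ^ n := zpow_pos two_pos n
    simp_rw [abs_of_nonneg (hpos f _)]
    calc ENNReal.ofReal (2 * 3 * 2 ^ n) ^ 2 * μ {x | 3 * 2 ^ n < T f x}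
        = (6 * ENNReal.ofReal (2 ^ n)) ^ 2 * μ {x | 3 * 2 ^ n < T f x} := by
          rw [ENNReal.ofReal_mul (by norm_num)]
          norm_num
      _ ≤ (6 * ENNReal.ofReal (2 ^ n)) ^ 2
          * (B * eLpNorm (levelPart (Ioi (R * 2 ^ n)) f) 1 μ / ENNReal.ofReal (2 ^ n)
            + A * eLpNorm (levelPart (Ioc (2 ^ n) (R * 2 ^ n)) f) 2 μ ^ 2
              / ENNReal.ofReal (2 ^ n) ^ 2) := by
          gcongr
          exact measure_three_mul_lt_le hsub hweak2 hweak1 hinf hR h2n hf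
      _ = _ := by
          rw [sq_mul_mul_div_add_div_sq (ENNReal.ofReal_pos.2 h2n).ne' ENNReal.ofReal_ne_top]
          norm_num
  calc eLpNorm (T f) 2 μ ^ 2
      ≤ ∑' n : ℤ, ENNReal.ofReal (2 * 3 * 2 ^ n) ^ 2 * μ {x | 3 * 2 ^ n < |T f x|} := by
        rw [eLpNorm_two_sq_eq_lintegral]
        exact lintegral_sq_le_tsum_measure_lt _ three_pos
    _ ≤ ∑' n : ℤ, 36 * (B * (ENNReal.ofReal (2 ^ n) * eLpNorm (levelPart (Ioi (R * 2 ^ n)) f) 1 μ)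
          + A * eLpNorm (levelPart (Ioc (2 ^ n) (R * 2 ^ n)) f) 2 μ ^ 2) :=
        ENNReal.tsum_le_tsum hlevel
    _ = 36 * (B * ∑' n : ℤ, ENNReal.ofReal (2 ^ n) * eLpNorm (levelPart (Ioi (R * 2 ^ n)) f) 1 μ
          + A * ∑' n : ℤ, eLpNorm (levelPart (Ioc (2 ^ n) (R * 2 ^ n)) f) 2 μ ^ 2) := by
        rw [ENNReal.tsum_mul_left, ENNReal.tsum_add, ENNReal.tsum_mul_left, ENNReal.tsum_mul_left]
    _ ≤ 36 * (B * (ENNReal.ofReal (2 / R) * eLpNorm f 2 μ ^ 2)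
          + A * (ENNReal.ofReal (logb 2 R + 1) * eLpNorm f 2 μ ^ 2)) := by
        gcongr
        · exact tsum_zpow_mul_eLpNorm_levelPart_Ioi_le (by linarith) hf.1
        · exact tsum_eLpNorm_levelPart_Ioc_sq_le hR hf.1
    _ = _ := by ring

end Interpolation

theorem maximal_interpolation_general (a : ℕ) (C : ℝ) (hC : 0 < C) :
    ∃ β C' : ℝ, 0 < β ∧ 0 < C' ∧
      ∀ N : ℝ, 2 ≤ N →
      ∀ T : (EuclideanSpace ℝ (Fin 2) → ℝ) → EuclideanSpace ℝ (Fin 2) → ℝ,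
        (∀ f x, 0 ≤ T f x) →
        (∀ f g x, T (f + g) x ≤ T f x + T g x) →
        (∀ (c : ℝ) f x, T (c • f) x = |c| * T f x) →
        (∀ f, MemLp f 2 volume → ∀ α : ℝ, 0 < α →
          volume {x | α < T f x} ≤
            ENNReal.ofReal (C * Real.logb 2 N ^ (2 * a + 1)) *
              (eLpNorm f 2 volume) ^ 2 / ENNReal.ofReal α ^ 2) →
        (∀ f, MemLp f 1 volume → ∀ α : ℝ, 0 < α →
          volume {x | α < T f x} ≤
            ENNReal.ofReal (C * N) * eLpNorm f 1 volume / ENNReal.ofReal α) →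
        (∀ f, eLpNorm (T f) ⊤ volume ≤ eLpNorm f ⊤ volume) →
        ∀ f, MemLp f 2 volume →
          eLpNorm (T f) 2 volume ≤
            ENNReal.ofReal (C' * Real.logb 2 N ^ β) * eLpNorm f 2 volume := by
  refine ⟨(a + 1 : ℕ), 12 * √C, by positivity, by positivity, ?_⟩
  intro N hN T hpos hsub _ hweak2 hweak1 hinf f hf
  set L := logb 2 N
  have hL : 1 ≤ L := by
    rw [le_logb_iff_rpow_le one_lt_two (by linarith), rpow_one]
    exact hN
  have hconst : 36 * (C * N * (2 / N) + C * L ^ (2 * a + 1) * (L + 1))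
      ≤ (12 * √C * L ^ (a + 1)) ^ 2 := by
    have hpow : L ^ (2 * a + 1) ≤ L ^ (2 * a + 2) := pow_le_pow_right₀ hL (by omega)
    have hone : 1 ≤ L ^ (2 * a + 2) := one_le_pow₀ hL
    have h2 : C * N * (2 / N) = 2 * C := by field_simp
    have hsplit : L ^ (2 * a + 1) * (L + 1) = L ^ (2 * a + 2) + L ^ (2 * a + 1) := by ring
    rw [h2, mul_assoc C, hsplit, mul_pow, mul_pow, sq_sqrt hC.le, ← pow_mul,
      show (a + 1) * 2 = 2 * a + 2 by ring]
    nlinarith [mul_le_mul_of_nonneg_left hpow hC.le, mul_le_mul_of_nonneg_left hone hC.le]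
  rw [rpow_natCast, ← ENNReal.pow_le_pow_left_iff two_ne_zero, mul_pow,
    ← ENNReal.ofReal_pow (by positivity)]
  refine (eLpNorm_two_sq_le_of_weakType hpos hsub hweak2 hweak1 hinf (R := N) (by linarith)
    hf).trans ?_
  gcongr
  rw [← ENNReal.ofReal_mul (by positivity), ← ENNReal.ofReal_mul (by positivity),
    ← ENNReal.ofReal_add (by positivity) (by positivity), ← ENNReal.ofReal_ofNat,
    ← ENNReal.ofReal_mul (by norm_num)]
  exact ENNReal.ofReal_le_ofReal hconst

theorem maximal_interpolation (a : ℕ) (ha : 1 ≤ a) (C : ℝ) (hC : 0 < C) :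
    ∃ β C' : ℝ, 0 < β ∧ 0 < C' ∧
      ∀ N : ℝ, 2 ≤ N →
      ∀ T : (EuclideanSpace ℝ (Fin 2) → ℝ) → EuclideanSpace ℝ (Fin 2) → ℝ,
        (∀ f x, 0 ≤ T f x) →
        (∀ f g x, T (f + g) x ≤ T f x + T g x) →
        (∀ (c : ℝ) f x, T (c • f) x = |c| * T f x) →
        (∀ f, MemLp f 2 volume → ∀ α : ℝ, 0 < α →
          volume {x | α < T f x} ≤
            ENNReal.ofReal (C * Real.logb 2 N ^ (2 * a + 1)) *
              (eLpNorm f 2 volume) ^ 2 / ENNReal.ofReal α ^ 2) →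
        (∀ f, MemLp f 1 volume → ∀ α : ℝ, 0 < α →
          volume {x | α < T f x} ≤
            ENNReal.ofReal (C * N) * eLpNorm f 1 volume / ENNReal.ofReal α) →
        (∀ f, eLpNorm (T f) ⊤ volume ≤ eLpNorm f ⊤ volume) →
        ∀ f, MemLp f 2 volume →
          eLpNorm (T f) 2 volume ≤
            ENNReal.ofReal (C' * Real.logb 2 N ^ β) * eLpNorm f 2 volume :=
  maximal_interpolation_general a C hC
end
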